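/- arXiv:2103.08226 — 5 statements merged into one kernel-verified Lean document; each statement's English description precedes it below -/
import Mathlib

section
/- Let Π_1, Π_2 be minimal projections in a *-algebra A on a finite-dimensional complex Hilbert space and A ∈ A. If S̃ := Π_1 A Π_2 ≠ 0, then tr(Π_1) = tr(Π_2) and S := c·S̃ with c = sqrt(tr(Π_1)/tr(S̃S̃†)) is a partial isometry satisfying SS† = Π_1 and S†S = Π_2. -/
open Matrix

lemma trace_mul_conjT {n : ℕ} (M : Matrix (Fin n) (Fin n) ℂ) :
    Matrix.trace (M * Mᴴ) = ((∑ i, ∑ j, Complex.normSq (M i j) : ℝ) : ℂ) := by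
  simp [Matrix.trace, Matrix.mul_apply, Matrix.diag, Matrix.conjTranspose_apply,
    Complex.mul_conj]

lemma sum_normSq_pos {n : ℕ} (M : Matrix (Fin n) (Fin n) ℂ) (hM : M ≠ 0) :
    0 < (∑ i, ∑ j, Complex.normSq (M i j)) := by
  rcases lt_or_eq_of_le (Finset.sum_nonneg fun i _ => Finset.sum_nonneg fun j _ =>
    Complex.normSq_nonneg _) with h | h
  · exact h
  · exfalso; apply hM
    ext i j
    have := (Finset.sum_eq_zero_iff_of_nonneg (fun i _ => Finset.sum_nonneg fun j _ =>
      Complex.normSq_nonneg _)).mp h.symm i (Finset.mem_univ i)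
    have := (Finset.sum_eq_zero_iff_of_nonneg (fun j _ =>
      Complex.normSq_nonneg _)).mp this j (Finset.mem_univ j)
    simpa [Complex.normSq_eq_zero] using this

/-- Let Π_1, Π_2 be minimal projections in a *-algebra A and B ∈ A.  If
S̃ := Π_1 B Π_2 ≠ 0, then tr(Π_1) = tr(Π_2) and S := c·S̃ with
c = √(tr(Π_1)/tr(S̃S̃†)) is a partial isometry with SS† = Π_1 and S†S = Π_2. -/
theorem minimal_isometry_from_minimal_projections {n : ℕ}
    (A : StarSubalgebra ℂ (Matrix (Fin n) (Fin n) ℂ))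
    (P1 P2 B : Matrix (Fin n) (Fin n) ℂ)
    (hP1A : P1 ∈ A) (hP2A : P2 ∈ A) (hBA : B ∈ A)
    (hP10 : P1 ≠ 0) (hP1sa : P1ᴴ = P1) (hP1idem : P1 * P1 = P1)
    (hP20 : P2 ≠ 0) (hP2sa : P2ᴴ = P2) (hP2idem : P2 * P2 = P2)
    (hP1min : ∀ C ∈ A, ∃ c : ℂ, P1 * C * P1 = c • P1)
    (hP2min : ∀ C ∈ A, ∃ c : ℂ, P2 * C * P2 = c • P2)
    (hne : P1 * B * P2 ≠ 0) :
    Matrix.trace P1 = Matrix.trace P2 ∧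
    ((Real.sqrt ((Matrix.trace P1).re /
        (Matrix.trace ((P1 * B * P2) * (P1 * B * P2)ᴴ)).re) : ℂ) • (P1 * B * P2)) *
      ((Real.sqrt ((Matrix.trace P1).re /
        (Matrix.trace ((P1 * B * P2) * (P1 * B * P2)ᴴ)).re) : ℂ) • (P1 * B * P2))ᴴ = P1 ∧
    ((Real.sqrt ((Matrix.trace P1).re /
        (Matrix.trace ((P1 * B * P2) * (P1 * B * P2)ᴴ)).re) : ℂ) • (P1 * B * P2))ᴴ *
      ((Real.sqrt ((Matrix.trace P1).re /
        (Matrix.trace ((P1 * B * P2) * (P1 * B * P2)ᴴ)).re) : ℂ) • (P1 * B * P2)) = P2 := by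
  set S : Matrix (Fin n) (Fin n) ℂ := P1 * B * P2 with hS
  have hBH : Bᴴ ∈ A := by
    simpa [Matrix.star_eq_conjTranspose] using star_mem hBA
  -- S̃ S̃ᴴ = α • P1
  obtain ⟨α, hα⟩ := hP1min (B * P2 * Bᴴ) (mul_mem (mul_mem hBA hP2A) hBH)
  have hSH : Sᴴ = P2 * Bᴴ * P1 := by
    simp [hS, Matrix.conjTranspose_mul, hP1sa, hP2sa, mul_assoc]
  have hSS : S * Sᴴ = α • P1 := by
    rw [hSH, ← hα]
    calc P1 * B * P2 * (P2 * Bᴴ * P1)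
        = P1 * B * (P2 * P2) * Bᴴ * P1 := by noncomm_ring
      _ = P1 * (B * P2 * Bᴴ) * P1 := by rw [hP2idem]; noncomm_ring
  -- S̃ᴴ S̃ = β • P2
  obtain ⟨β, hβ⟩ := hP2min (Bᴴ * P1 * B) (mul_mem (mul_mem hBH hP1A) hBA)
  have hSS' : Sᴴ * S = β • P2 := by
    rw [hSH, ← hβ, hS]
    calc P2 * Bᴴ * P1 * (P1 * B * P2)
        = P2 * Bᴴ * (P1 * P1) * B * P2 := by noncomm_ring
      _ = P2 * (Bᴴ * P1 * B) * P2 := by rw [hP1idem]; noncomm_ring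
  -- trace facts
  have hs1 : Matrix.trace P1 = ((∑ i, ∑ j, Complex.normSq (P1 i j) : ℝ) : ℂ) := by
    rw [← trace_mul_conjT]; rw [hP1sa, hP1idem]
  have hs2 : Matrix.trace P2 = ((∑ i, ∑ j, Complex.normSq (P2 i j) : ℝ) : ℂ) := by
    rw [← trace_mul_conjT]; rw [hP2sa, hP2idem]
  set s1 : ℝ := ∑ i, ∑ j, Complex.normSq (P1 i j)
  set s2 : ℝ := ∑ i, ∑ j, Complex.normSq (P2 i j)
  set sr : ℝ := ∑ i, ∑ j, Complex.normSq (S i j)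
  have hs1pos : 0 < s1 := sum_normSq_pos P1 hP10
  have hs2pos : 0 < s2 := sum_normSq_pos P2 hP20
  have hsrpos : 0 < sr := sum_normSq_pos S hne
  have hsr : Matrix.trace (S * Sᴴ) = ((sr : ℝ) : ℂ) := trace_mul_conjT S
  -- α * s1 = sr
  have hαs : α * (s1 : ℂ) = (sr : ℂ) := by
    have := congrArg Matrix.trace hSS
    rw [hsr, Matrix.trace_smul, hs1] at this
    simpa [smul_eq_mul] using this.symm
  -- β * s2 = sr
  have hβs : β * (s2 : ℂ) = (sr : ℂ) := by
    have := congrArg Matrix.trace hSS'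
    rw [Matrix.trace_mul_comm, hsr, Matrix.trace_smul, hs2] at this
    simpa [smul_eq_mul] using this.symm
  have hs1ne : (s1 : ℂ) ≠ 0 := by exact_mod_cast hs1pos.ne'
  have hs2ne : (s2 : ℂ) ≠ 0 := by exact_mod_cast hs2pos.ne'
  have hsrne : (sr : ℂ) ≠ 0 := by exact_mod_cast hsrpos.ne'
  have hαne : α ≠ 0 := by
    intro h; rw [h, zero_mul] at hαs; exact hsrne hαs.symm
  have hβne : β ≠ 0 := by
    intro h; rw [h, zero_mul] at hβs; exact hsrne hβs.symm
  -- β = α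
  have hβα : β = α := by
    have h1 : (Sᴴ * S) * (Sᴴ * S) = (β * β) • P2 := by
      rw [hSS', smul_mul_assoc, mul_smul_comm, hP2idem, smul_smul]
    have h2 : (Sᴴ * S) * (Sᴴ * S) = (α * β) • P2 := by
      have hP1S : P1 * S = S := by rw [hS, ← mul_assoc, ← mul_assoc, hP1idem]
      calc (Sᴴ * S) * (Sᴴ * S) = Sᴴ * (S * Sᴴ) * S := by noncomm_ring
        _ = Sᴴ * (α • P1) * S := by rw [hSS]
        _ = α • (Sᴴ * (P1 * S)) := by
            rw [mul_smul_comm, smul_mul_assoc, mul_assoc]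
        _ = α • (β • P2) := by rw [hP1S, hSS']
        _ = (α * β) • P2 := by rw [smul_smul]
    have := h1.symm.trans h2
    have hzero : (β * β - α * β) • P2 = 0 := by
      rw [sub_smul, this, sub_self]
    rcases smul_eq_zero.mp hzero with h | h
    · have : β * (β - α) = 0 := by linear_combination h
      rcases mul_eq_zero.mp this with h' | h'
      · exact absurd h' hβne
      · exact sub_eq_zero.mp h'
    · exact absurd h hP20
  -- trace equality
  have hs12 : s1 = s2 := by
    have : α * (s1 : ℂ) = α * (s2 : ℂ) := by rw [hαs, ← hβα, hβs]
    exact_mod_cast mul_left_cancel₀ hαne this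
  have htr : Matrix.trace P1 = Matrix.trace P2 := by rw [hs1, hs2, hs12]
  -- scalar computation
  have hre1 : (Matrix.trace P1).re = s1 := by rw [hs1]; simp
  have hre2 : (Matrix.trace (S * Sᴴ)).re = sr := by rw [hsr]; simp
  set c : ℝ := Real.sqrt ((Matrix.trace P1).re / (Matrix.trace (S * Sᴴ)).re) with hc
  have hcc : (c : ℂ) * (c : ℂ) = ((s1 / sr : ℝ) : ℂ) := by
    rw [← Complex.ofReal_mul, hc, hre1, hre2,
      Real.mul_self_sqrt (div_nonneg hs1pos.le hsrpos.le)]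
  have hkey : (c : ℂ) * (c : ℂ) * α = 1 := by
    rw [hcc]
    have : α = (sr : ℂ) / (s1 : ℂ) := by
      field_simp at hαs ⊢; linear_combination hαs
    rw [this]
    push_cast
    field_simp
  refine ⟨htr, ?_, ?_⟩
  · rw [Matrix.conjTranspose_smul]
    have hstar : star (c : ℂ) = (c : ℂ) := by simp [Complex.star_def]
    rw [hstar, smul_mul_assoc, mul_smul_comm, hSS, smul_smul, smul_smul, hkey, one_smul]
  · rw [Matrix.conjTranspose_smul]
    have hstar : star (c : ℂ) = (c : ℂ) := by simp [Complex.star_def]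
    rw [hstar, smul_mul_assoc, mul_smul_comm, hSS', smul_smul, smul_smul, hβα, hkey, one_smul]
end

section
/- Let Π_1, Π_2 be orthogonal projections on a finite-dimensional complex Hilbert space. Then the nonzero eigenvalues of Π_1Π_2Π_1 and Π_2Π_1Π_2 coincide; moreover, writing Π_1Π_2Π_1 = Σ_{λ≠0} λ Π_1^{(λ)} and Π_2Π_1Π_2 = Σ_{λ≠0} λ Π_2^{(λ)} as spectral decompositions, one has Π_2^{(λ)} = (1/λ) Π_2 Π_1^{(λ)} Π_2 for each nonzero eigenvalue λ. -/
open Matrix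

/-- Basic consequences of a spectral-type decomposition `P1*P2*P1 = ∑ x • Q x`. -/
private lemma scatter_aux {n : ℕ}
    (P1 P2 : Matrix (Fin n) (Fin n) ℂ)
    (hP1idem : P1 * P1 = P1) (hP2idem : P2 * P2 = P2)
    (Λ : Finset ℂ) (Q : ℂ → Matrix (Fin n) (Fin n) ℂ)
    (hΛ : (0:ℂ) ∉ Λ)
    (hQ : ∀ x ∈ Λ, (Q x)ᴴ = Q x ∧ Q x * Q x = Q x ∧ Q x ≠ 0)
    (hQorth : ∀ x ∈ Λ, ∀ y ∈ Λ, x ≠ y → Q x * Q y = 0)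
    (hdec : P1 * P2 * P1 = ∑ x ∈ Λ, x • Q x)
    (x : ℂ) (hx : x ∈ Λ) :
    (P1 * P2 * P1) * Q x = x • Q x ∧
    Q x * (P1 * P2 * P1) = x • Q x ∧
    P1 * Q x = Q x ∧
    Q x * P1 = Q x ∧
    (P2 * Q x * P2) * (P2 * P1 * P2) = x • (P2 * Q x * P2) ∧
    P1 * (P2 * Q x * P2) * P1 = (x * x) • Q x ∧
    P2 * Q x * P2 ≠ 0 := by
  have hx0 : x ≠ 0 := fun h => hΛ (h ▸ hx)
  have o1 : (P1 * P2 * P1) * Q x = x • Q x := by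
    rw [hdec, Finset.sum_mul,
      Finset.sum_eq_single x
        (fun y hy hyx => by rw [smul_mul_assoc, hQorth y hy x hx hyx, smul_zero])
        (fun h => absurd hx h)]
    rw [smul_mul_assoc, (hQ x hx).2.1]
  have o2 : Q x * (P1 * P2 * P1) = x • Q x := by
    rw [hdec, Finset.mul_sum,
      Finset.sum_eq_single x
        (fun y hy hyx => by rw [mul_smul_comm, hQorth x hx y hy (Ne.symm hyx), smul_zero])
        (fun h => absurd hx h)]
    rw [mul_smul_comm, (hQ x hx).2.1]
  have hA1 : P1 * (P1 * P2 * P1) = P1 * P2 * P1 := by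
    rw [← mul_assoc, ← mul_assoc, hP1idem]
  have hA2 : (P1 * P2 * P1) * P1 = P1 * P2 * P1 := by
    rw [mul_assoc, hP1idem]
  have o3 : P1 * Q x = Q x := by
    have h := congrArg (fun M => P1 * M) o1
    simp only [mul_smul_comm] at h
    rw [← mul_assoc, hA1, o1] at h
    exact (smul_right_injective _ hx0 h.symm)
  have o4 : Q x * P1 = Q x := by
    have h := congrArg (fun M => M * P1) o2
    simp only [smul_mul_assoc] at h
    rw [mul_assoc, hA2, o2] at h
    exact (smul_right_injective _ hx0 h.symm)
  have key1 : ∀ X, P1 * (P2 * (P1 * (Q x * X))) = x • (Q x * X) := by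
    intro X
    have h := congrArg (fun M => M * X) o1
    simpa only [mul_assoc, smul_mul_assoc] using h
  have key2 : ∀ X, Q x * (P2 * (P1 * X)) = x • (Q x * X) := by
    intro X
    have h := congrArg (fun M => M * X) o2
    simp only [mul_assoc, smul_mul_assoc] at h
    calc Q x * (P2 * (P1 * X)) = Q x * P1 * (P2 * (P1 * X)) := by rw [o4]
      _ = Q x * (P1 * (P2 * (P1 * X))) := by rw [mul_assoc]
      _ = x • (Q x * X) := h
  have key3 : Q x * (P2 * P1) = x • Q x := by
    calc Q x * (P2 * P1) = Q x * P1 * (P2 * P1) := by rw [o4]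
      _ = Q x * (P1 * P2 * P1) := by simp only [mul_assoc]
      _ = x • Q x := o2
  have o5 : (P2 * Q x * P2) * (P2 * P1 * P2) = x • (P2 * Q x * P2) := by
    have p2p2 : P2 * (P2 * (P1 * P2)) = P2 * (P1 * P2) := by
      rw [← mul_assoc, hP2idem]
    calc (P2 * Q x * P2) * (P2 * P1 * P2)
        = P2 * (Q x * (P2 * (P2 * (P1 * P2)))) := by simp only [mul_assoc]
      _ = P2 * (Q x * (P2 * (P1 * P2))) := by rw [p2p2]
      _ = P2 * (x • (Q x * P2)) := by rw [key2 P2]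
      _ = x • (P2 * Q x * P2) := by rw [mul_smul_comm, mul_assoc]
  have o6 : P1 * (P2 * Q x * P2) * P1 = (x * x) • Q x := by
    calc P1 * (P2 * Q x * P2) * P1
        = P1 * (P2 * (P1 * (Q x * (P2 * P1)))) := by
          conv_lhs => rw [← o3]
          simp only [mul_assoc]
      _ = x • (Q x * (P2 * P1)) := key1 (P2 * P1)
      _ = x • (x • Q x) := by rw [key3]
      _ = (x * x) • Q x := by rw [smul_smul]
  have o7 : P2 * Q x * P2 ≠ 0 := by
    intro h
    have h0 : (x * x) • Q x = 0 := by rw [← o6, h, mul_zero, zero_mul]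
    rcases smul_eq_zero.mp h0 with h' | h'
    · exact hx0 (mul_self_eq_zero.mp h')
    · exact (hQ x hx).2.2 h'
  exact ⟨o1, o2, o3, o4, o5, o6, o7⟩

private lemma cancel_lem {n : ℕ} {x y : ℂ} {U B W : Matrix (Fin n) (Fin n) ℂ}
    (h1 : U * B = x • U) (h2 : B * W = y • W) (hxy : x ≠ y) : U * W = 0 := by
  have h : x • (U * W) = y • (U * W) := by
    calc x • (U * W) = (x • U) * W := (smul_mul_assoc _ _ _).symm
      _ = U * B * W := by rw [h1]
      _ = U * (B * W) := mul_assoc _ _ _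
      _ = U * (y • W) := by rw [h2]
      _ = y • (U * W) := mul_smul_comm _ _ _
  have h0 : (x - y) • (U * W) = 0 := by rw [sub_smul, h, sub_self]
  rcases smul_eq_zero.mp h0 with h' | h'
  · exact absurd (sub_eq_zero.mp h') hxy
  · exact h'

/-- Scattering of projections: for orthogonal projections Π_1, Π_2, the nonzero
eigenvalues of Π_1Π_2Π_1 and Π_2Π_1Π_2 coincide; moreover, writing the spectral
decompositions Π_1Π_2Π_1 = Σ_{λ≠0} λ Π_1^{(λ)} and Π_2Π_1Π_2 = Σ_{λ≠0} λ Π_2^{(λ)},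
one has Π_2^{(λ)} = (1/λ) Π_2 Π_1^{(λ)} Π_2 for each nonzero eigenvalue λ. -/
theorem scattering_same_spectrum {n : ℕ}
    (P1 P2 : Matrix (Fin n) (Fin n) ℂ)
    (hP1sa : P1ᴴ = P1) (hP1idem : P1 * P1 = P1)
    (hP2sa : P2ᴴ = P2) (hP2idem : P2 * P2 = P2)
    (Λ1 Λ2 : Finset ℂ) (Q1 Q2 : ℂ → Matrix (Fin n) (Fin n) ℂ)
    (hΛ1 : (0 : ℂ) ∉ Λ1) (hΛ2 : (0 : ℂ) ∉ Λ2)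
    (hQ1 : ∀ x ∈ Λ1, (Q1 x)ᴴ = Q1 x ∧ Q1 x * Q1 x = Q1 x ∧ Q1 x ≠ 0)
    (hQ2 : ∀ x ∈ Λ2, (Q2 x)ᴴ = Q2 x ∧ Q2 x * Q2 x = Q2 x ∧ Q2 x ≠ 0)
    (hQ1orth : ∀ x ∈ Λ1, ∀ y ∈ Λ1, x ≠ y → Q1 x * Q1 y = 0)
    (hQ2orth : ∀ x ∈ Λ2, ∀ y ∈ Λ2, x ≠ y → Q2 x * Q2 y = 0)
    (hdec1 : P1 * P2 * P1 = ∑ x ∈ Λ1, x • Q1 x)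
    (hdec2 : P2 * P1 * P2 = ∑ x ∈ Λ2, x • Q2 x) :
    Λ1 = Λ2 ∧ ∀ x ∈ Λ1, Q2 x = x⁻¹ • (P2 * Q1 x * P2) := by
  have K1 := fun x hx => scatter_aux P1 P2 hP1idem hP2idem Λ1 Q1 hΛ1 hQ1 hQ1orth hdec1 x hx
  have K2 := fun y hy => scatter_aux P2 P1 hP2idem hP1idem Λ2 Q2 hΛ2 hQ2 hQ2orth hdec2 y hy
  -- cross orthogonality
  have corth12 : ∀ x ∈ Λ1, ∀ y ∈ Λ2, x ≠ y → (P2 * Q1 x * P2) * Q2 y = 0 := by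
    intro x hx y hy hxy
    exact cancel_lem (K1 x hx).2.2.2.2.1 (K2 y hy).1 hxy
  have corth21 : ∀ y ∈ Λ2, ∀ x ∈ Λ1, y ≠ x → (P1 * Q2 y * P1) * Q1 x = 0 := by
    intro y hy x hx hyx
    exact cancel_lem (K2 y hy).2.2.2.2.1 (K1 x hx).1 hyx
  have sub12 : Λ1 ⊆ Λ2 := by
    intro x hx
    by_contra hxn
    have hx0 : x ≠ 0 := fun h => hΛ1 (h ▸ hx)
    have hz : x • (P2 * Q1 x * P2) = 0 := by
      rw [← (K1 x hx).2.2.2.2.1, hdec2, Finset.mul_sum]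
      exact Finset.sum_eq_zero fun y hy => by
        rw [mul_smul_comm, corth12 x hx y hy (fun hxy => hxn (hxy ▸ hy)), smul_zero]
    rcases smul_eq_zero.mp hz with h' | h'
    · exact hx0 h'
    · exact (K1 x hx).2.2.2.2.2.2 h'
  have sub21 : Λ2 ⊆ Λ1 := by
    intro y hy
    by_contra hyn
    have hy0 : y ≠ 0 := fun h => hΛ2 (h ▸ hy)
    have hz : y • (P1 * Q2 y * P1) = 0 := by
      rw [← (K2 y hy).2.2.2.2.1, hdec1, Finset.mul_sum]
      exact Finset.sum_eq_zero fun x hx => by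
        rw [mul_smul_comm, corth21 y hy x hx (fun hyx => hyn (hyx ▸ hx)), smul_zero]
    rcases smul_eq_zero.mp hz with h' | h'
    · exact hy0 h'
    · exact (K2 y hy).2.2.2.2.2.2 h'
  have hEq : Λ1 = Λ2 := Finset.Subset.antisymm sub12 sub21
  refine ⟨hEq, ?_⟩
  intro x hx
  have hx2 : x ∈ Λ2 := hEq ▸ hx
  have hx0 : x ≠ 0 := fun h => hΛ1 (h ▸ hx)
  -- step 1 : (P2 Q1x P2) * Q2x = P2 Q1x P2
  have hUQ2 : (P2 * Q1 x * P2) * Q2 x = P2 * Q1 x * P2 := by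
    have h : x • (P2 * Q1 x * P2) = x • ((P2 * Q1 x * P2) * Q2 x) := by
      calc x • (P2 * Q1 x * P2) = (P2 * Q1 x * P2) * (P2 * P1 * P2) :=
            ((K1 x hx).2.2.2.2.1).symm
        _ = ∑ y ∈ Λ2, y • ((P2 * Q1 x * P2) * Q2 y) := by
            rw [hdec2, Finset.mul_sum]; simp only [mul_smul_comm]
        _ = x • ((P2 * Q1 x * P2) * Q2 x) :=
            Finset.sum_eq_single x
              (fun y hy hyx => by rw [corth12 x hx y hy (Ne.symm hyx), smul_zero])
              (fun h => absurd hx2 h)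
    exact (smul_right_injective _ hx0 h).symm
  -- step 2 : (P1 Q2x P1) * Q1x = P1 Q2x P1
  have hVQ1 : (P1 * Q2 x * P1) * Q1 x = P1 * Q2 x * P1 := by
    have h : x • (P1 * Q2 x * P1) = x • ((P1 * Q2 x * P1) * Q1 x) := by
      calc x • (P1 * Q2 x * P1) = (P1 * Q2 x * P1) * (P1 * P2 * P1) :=
            ((K2 x hx2).2.2.2.2.1).symm
        _ = ∑ y ∈ Λ1, y • ((P1 * Q2 x * P1) * Q1 y) := by
            rw [hdec1, Finset.mul_sum]; simp only [mul_smul_comm]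
        _ = x • ((P1 * Q2 x * P1) * Q1 x) :=
            Finset.sum_eq_single x
              (fun y hy hyx => by rw [corth21 x hx2 y hy (Ne.symm hyx), smul_zero])
              (fun h => absurd hx h)
    exact (smul_right_injective _ hx0 h).symm
  -- step 3 : Q1x * (P1 Q2x P1) = P1 Q2x P1  (adjoint of step 2)
  have hQ1V : Q1 x * (P1 * Q2 x * P1) = P1 * Q2 x * P1 := by
    have h := congrArg conjTranspose hVQ1
    simpa only [conjTranspose_mul, hP1sa, (hQ1 x hx).1, (hQ2 x hx2).1, mul_assoc] using h
  -- step 4 : key multiplicative identity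
  have key2 : ∀ X, Q1 x * (P2 * (P1 * X)) = x • (Q1 x * X) := by
    intro X
    have h := congrArg (fun M => M * X) (K1 x hx).2.1
    simp only [mul_assoc, smul_mul_assoc] at h
    calc Q1 x * (P2 * (P1 * X)) = Q1 x * P1 * (P2 * (P1 * X)) := by
          rw [(K1 x hx).2.2.2.1]
      _ = Q1 x * (P1 * (P2 * (P1 * X))) := by rw [mul_assoc]
      _ = x • (Q1 x * X) := h
  have hQ1V_app : Q1 x * (P1 * (Q2 x * (P1 * P2))) = P1 * (Q2 x * (P1 * P2)) := by
    simpa only [mul_assoc] using congrArg (fun M => M * P2) hQ1V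
  have hKey : (P2 * Q1 x * P2) * (P2 * (P1 * Q2 x * P1) * P2)
      = x • (P2 * (P1 * Q2 x * P1) * P2) := by
    calc (P2 * Q1 x * P2) * (P2 * (P1 * Q2 x * P1) * P2)
        = P2 * (Q1 x * (P2 * (P2 * (P1 * (Q2 x * (P1 * P2)))))) := by
          simp only [mul_assoc]
      _ = P2 * (Q1 x * (P2 * (P1 * (Q2 x * (P1 * P2))))) := by
          rw [show P2 * (P2 * (P1 * (Q2 x * (P1 * P2)))) = P2 * (P1 * (Q2 x * (P1 * P2)))
            from by rw [← mul_assoc, hP2idem]]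
      _ = P2 * (Q1 x * (P2 * (P1 * (P1 * (Q2 x * (P1 * P2)))))) := by
          rw [show P1 * (P1 * (Q2 x * (P1 * P2))) = P1 * (Q2 x * (P1 * P2))
            from by rw [← mul_assoc, hP1idem]]
      _ = P2 * (x • (Q1 x * (P1 * (Q2 x * (P1 * P2))))) := by rw [key2]
      _ = P2 * (x • (P1 * (Q2 x * (P1 * P2)))) := by rw [hQ1V_app]
      _ = x • (P2 * (P1 * Q2 x * P1) * P2) := by
          rw [mul_smul_comm]; simp only [mul_assoc]
  have hPVP : P2 * (P1 * Q2 x * P1) * P2 = (x * x) • Q2 x := (K2 x hx2).2.2.2.2.2.1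
  have hxx0 : x * x ≠ 0 := mul_ne_zero hx0 hx0
  have hUQ2' : (P2 * Q1 x * P2) * Q2 x = x • Q2 x := by
    have h : (x * x) • ((P2 * Q1 x * P2) * Q2 x) = (x * x) • (x • Q2 x) := by
      calc (x * x) • ((P2 * Q1 x * P2) * Q2 x)
          = (P2 * Q1 x * P2) * ((x * x) • Q2 x) := (mul_smul_comm _ _ _).symm
        _ = (P2 * Q1 x * P2) * (P2 * (P1 * Q2 x * P1) * P2) := by rw [hPVP]
        _ = x • (P2 * (P1 * Q2 x * P1) * P2) := hKey
        _ = x • ((x * x) • Q2 x) := by rw [hPVP]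
        _ = (x * x) • (x • Q2 x) := smul_comm _ _ _
    exact smul_right_injective _ hxx0 h
  have hfin : P2 * Q1 x * P2 = x • Q2 x := hUQ2.symm.trans hUQ2'
  rw [hfin, inv_smul_smul₀ hx0]
end

section
/- Let Π_1, Π_2 be orthogonal projections with spectral decompositions Π_1Π_2Π_1 = Σ_{λ≠0} λ Π_1^{(λ)} and Π_2Π_1Π_2 = Σ_{λ≠0} λ Π_2^{(λ)}. Then for λ ≠ λ' (both nonzero) the projections Π_1^{(λ)} and Π_2^{(λ')} are orthogonal (Π_1^{(λ)} Π_2^{(λ')} = 0), and for each common nonzero λ the pair is reflecting: Π_1^{(λ)} Π_2^{(λ)} Π_1^{(λ)} = λ Π_1^{(λ)} and Π_2^{(λ)} Π_1^{(λ)} Π_2^{(λ)} = λ Π_2^{(λ)}. -/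
open Matrix

lemma scattering_aux {n : ℕ} (P1 P2 : Matrix (Fin n) (Fin n) ℂ)
    (hP1idem : P1 * P1 = P1)
    (Λ1 : Finset ℂ) (Q1 : ℂ → Matrix (Fin n) (Fin n) ℂ)
    (hΛ1 : (0 : ℂ) ∉ Λ1)
    (hQ1 : ∀ x ∈ Λ1, Q1 x * Q1 x = Q1 x)
    (hQ1orth : ∀ x ∈ Λ1, ∀ y ∈ Λ1, x ≠ y → Q1 x * Q1 y = 0)
    (hdec1 : P1 * P2 * P1 = ∑ x ∈ Λ1, x • Q1 x) :
    ∀ x ∈ Λ1, Q1 x * (P2 * P1) = x • Q1 x ∧ P1 * P2 * Q1 x = x • Q1 x ∧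
      Q1 x * P2 * Q1 x = x • Q1 x := by
  intro x hx
  have hx0 : x ≠ 0 := fun h => hΛ1 (h ▸ hx)
  have AQ : (P1 * P2 * P1) * Q1 x = x • Q1 x := by
    rw [hdec1, Finset.sum_mul, Finset.sum_eq_single x]
    · rw [smul_mul_assoc, hQ1 x hx]
    · intro y hy hyx
      rw [smul_mul_assoc, hQ1orth y hy x hx hyx, smul_zero]
    · intro h; exact absurd hx h
  have QA : Q1 x * (P1 * P2 * P1) = x • Q1 x := by
    rw [hdec1, Finset.mul_sum, Finset.sum_eq_single x]
    · rw [mul_smul_comm, hQ1 x hx]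
    · intro y hy hyx
      rw [mul_smul_comm, hQ1orth x hx y hy (fun h => hyx h.symm), smul_zero]
    · intro h; exact absurd hx h
  have AP : (P1 * P2 * P1) * P1 = P1 * P2 * P1 := by rw [mul_assoc, hP1idem]
  have PA : P1 * (P1 * P2 * P1) = P1 * P2 * P1 := by
    rw [← mul_assoc, ← mul_assoc, hP1idem]
  have QP : Q1 x * P1 = Q1 x := by
    apply smul_right_injective _ hx0
    calc x • (Q1 x * P1) = (x • Q1 x) * P1 := (smul_mul_assoc x _ _).symm
      _ = (Q1 x * (P1 * P2 * P1)) * P1 := by rw [QA]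
      _ = Q1 x * ((P1 * P2 * P1) * P1) := mul_assoc _ _ _
      _ = Q1 x * (P1 * P2 * P1) := by rw [AP]
      _ = x • Q1 x := QA
  have PQ : P1 * Q1 x = Q1 x := by
    apply smul_right_injective _ hx0
    calc x • (P1 * Q1 x) = P1 * (x • Q1 x) := (mul_smul_comm x _ _).symm
      _ = P1 * ((P1 * P2 * P1) * Q1 x) := by rw [AQ]
      _ = (P1 * (P1 * P2 * P1)) * Q1 x := (mul_assoc _ _ _).symm
      _ = (P1 * P2 * P1) * Q1 x := by rw [PA]
      _ = x • Q1 x := AQ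
  have g1 : Q1 x * (P2 * P1) = x • Q1 x := by
    rw [mul_assoc P1 P2 P1, ← mul_assoc, QP] at QA
    exact QA
  have g2 : P1 * P2 * Q1 x = x • Q1 x := by
    rw [mul_assoc, PQ] at AQ
    exact AQ
  refine ⟨g1, g2, ?_⟩
  calc Q1 x * P2 * Q1 x = Q1 x * P2 * (P1 * Q1 x) := by rw [PQ]
    _ = Q1 x * P2 * P1 * Q1 x := by rw [← mul_assoc]
    _ = (Q1 x * (P2 * P1)) * Q1 x := by rw [mul_assoc (Q1 x)]
    _ = (x • Q1 x) * Q1 x := by rw [g1]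
    _ = x • Q1 x := by rw [smul_mul_assoc, hQ1 x hx]

/-- Scattering output: for orthogonal projections Π_1, Π_2 with spectral
decompositions Π_1Π_2Π_1 = Σ_{λ≠0} λ Π_1^{(λ)} and Π_2Π_1Π_2 = Σ_{λ≠0} λ Π_2^{(λ)},
the pairs Π_1^{(λ)}, Π_2^{(λ')} are orthogonal for λ ≠ λ', and for a common
nonzero λ the pair is reflecting with coefficient λ. -/
theorem scattering_reflecting_pairs {n : ℕ}
    (P1 P2 : Matrix (Fin n) (Fin n) ℂ)
    (hP1sa : P1ᴴ = P1) (hP1idem : P1 * P1 = P1)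
    (hP2sa : P2ᴴ = P2) (hP2idem : P2 * P2 = P2)
    (Λ1 Λ2 : Finset ℂ) (Q1 Q2 : ℂ → Matrix (Fin n) (Fin n) ℂ)
    (hΛ1 : (0 : ℂ) ∉ Λ1) (hΛ2 : (0 : ℂ) ∉ Λ2)
    (hQ1 : ∀ x ∈ Λ1, (Q1 x)ᴴ = Q1 x ∧ Q1 x * Q1 x = Q1 x ∧ Q1 x ≠ 0)
    (hQ2 : ∀ x ∈ Λ2, (Q2 x)ᴴ = Q2 x ∧ Q2 x * Q2 x = Q2 x ∧ Q2 x ≠ 0)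
    (hQ1orth : ∀ x ∈ Λ1, ∀ y ∈ Λ1, x ≠ y → Q1 x * Q1 y = 0)
    (hQ2orth : ∀ x ∈ Λ2, ∀ y ∈ Λ2, x ≠ y → Q2 x * Q2 y = 0)
    (hdec1 : P1 * P2 * P1 = ∑ x ∈ Λ1, x • Q1 x)
    (hdec2 : P2 * P1 * P2 = ∑ x ∈ Λ2, x • Q2 x) :
    (∀ x ∈ Λ1, ∀ y ∈ Λ2, x ≠ y → Q1 x * Q2 y = 0) ∧
    (∀ x, x ∈ Λ1 → x ∈ Λ2 →
      Q1 x * Q2 x * Q1 x = x • Q1 x ∧ Q2 x * Q1 x * Q2 x = x • Q2 x) := by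
  have H1 := scattering_aux P1 P2 hP1idem Λ1 Q1 hΛ1
    (fun x hx => (hQ1 x hx).2.1) hQ1orth hdec1
  have H2 := scattering_aux P2 P1 hP2idem Λ2 Q2 hΛ2
    (fun x hx => (hQ2 x hx).2.1) hQ2orth hdec2
  have orth : ∀ x ∈ Λ1, ∀ y ∈ Λ2, x ≠ y → Q1 x * Q2 y = 0 := by
    intro x hx y hy hxy
    obtain ⟨h1, -, -⟩ := H1 x hx
    obtain ⟨-, h2, -⟩ := H2 y hy
    have key : x • (Q1 x * Q2 y) = y • (Q1 x * Q2 y) := by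
      calc x • (Q1 x * Q2 y) = (x • Q1 x) * Q2 y := (smul_mul_assoc _ _ _).symm
        _ = (Q1 x * (P2 * P1)) * Q2 y := by rw [h1]
        _ = Q1 x * (P2 * P1 * Q2 y) := mul_assoc _ _ _
        _ = Q1 x * (y • Q2 y) := by rw [h2]
        _ = y • (Q1 x * Q2 y) := mul_smul_comm _ _ _
    have hz : (x - y) • (Q1 x * Q2 y) = 0 := by rw [sub_smul, key, sub_self]
    rcases smul_eq_zero.mp hz with h | h
    · exact absurd (sub_eq_zero.mp h) hxy
    · exact h
  refine ⟨orth, ?_⟩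
  intro x hx1 hx2
  obtain ⟨h1a, h1b, h1c⟩ := H1 x hx1
  obtain ⟨h2a, h2b, h2c⟩ := H2 x hx2
  have hx0 : x ≠ 0 := fun h => hΛ1 (h ▸ hx1)
  have orth' : ∀ y ∈ Λ1, y ≠ x → Q2 x * Q1 y = 0 := by
    intro y hy hyx
    calc Q2 x * Q1 y = (Q1 y * Q2 x)ᴴ := by
          rw [conjTranspose_mul, (hQ1 y hy).1, (hQ2 x hx2).1]
      _ = 0 := by rw [orth y hy x hx2 hyx, conjTranspose_zero]
  constructor
  · have sum1 : Q1 x * (P2 * P1 * P2) * Q1 x = x • (Q1 x * Q2 x * Q1 x) := by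
      rw [hdec2, Finset.mul_sum, Finset.sum_mul, Finset.sum_eq_single x]
      · rw [mul_smul_comm, smul_mul_assoc]
      · intro y hy hyx
        rw [mul_smul_comm, smul_mul_assoc,
          orth x hx1 y hy (fun h => hyx h.symm), zero_mul, smul_zero]
      · intro h; exact absurd hx2 h
    have sum2 : Q1 x * (P2 * P1 * P2) * Q1 x = x • (x • Q1 x) := by
      calc Q1 x * (P2 * P1 * P2) * Q1 x
          = (Q1 x * (P2 * P1)) * P2 * Q1 x := by rw [← mul_assoc (Q1 x)]
        _ = (x • Q1 x) * P2 * Q1 x := by rw [h1a]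
        _ = x • (Q1 x * P2 * Q1 x) := by rw [smul_mul_assoc, smul_mul_assoc]
        _ = x • (x • Q1 x) := by rw [h1c]
    exact smul_right_injective _ hx0 (sum1.symm.trans sum2)
  · have sum1 : Q2 x * (P1 * P2 * P1) * Q2 x = x • (Q2 x * Q1 x * Q2 x) := by
      rw [hdec1, Finset.mul_sum, Finset.sum_mul, Finset.sum_eq_single x]
      · rw [mul_smul_comm, smul_mul_assoc]
      · intro y hy hyx
        rw [mul_smul_comm, smul_mul_assoc, orth' y hy hyx, zero_mul, smul_zero]
      · intro h; exact absurd hx1 h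
    have sum2 : Q2 x * (P1 * P2 * P1) * Q2 x = x • (x • Q2 x) := by
      calc Q2 x * (P1 * P2 * P1) * Q2 x
          = (Q2 x * (P1 * P2)) * P1 * Q2 x := by rw [← mul_assoc (Q2 x)]
        _ = (x • Q2 x) * P1 * Q2 x := by rw [h2a]
        _ = x • (Q2 x * P1 * Q2 x) := by rw [smul_mul_assoc, smul_mul_assoc]
        _ = x • (x • Q2 x) := by rw [h2c]
    exact smul_right_injective _ hx0 (sum1.symm.trans sum2)
end

section
/- Let Π be a minimal projection in a unital *-algebra A on a finite-dimensional complex Hilbert space, and let I_A ∈ A be a projection such that Π I_A Π = λΠ with λ ≠ 1 and I_A Π ≠ Π. Then Π̃ := (1/(1−λ)) (I − I_A) Π (I − I_A) is a projection in A, and it is minimal, and (I_A + Π̃)Π = Π. -/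
open Matrix

/-- Completion lemma: let Π be a minimal projection in a unital *-algebra A and
I_A ∈ A a projection with Π I_A Π = λΠ, λ ≠ 1 and I_A Π ≠ Π.  Then
Π̃ := (1/(1−λ)) (I − I_A) Π (I − I_A) is a projection in A (nonzero, self-adjoint,
idempotent), it is minimal, and (I_A + Π̃)Π = Π. -/
theorem completion_projection {n : ℕ}
    (A : StarSubalgebra ℂ (Matrix (Fin n) (Fin n) ℂ))
    (P IA : Matrix (Fin n) (Fin n) ℂ) (l : ℂ)
    (hPA : P ∈ A) (hIAA : IA ∈ A)
    (hP0 : P ≠ 0) (hPsa : Pᴴ = P) (hPidem : P * P = P)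
    (hIAsa : IAᴴ = IA) (hIAidem : IA * IA = IA)
    (hmin : ∀ B ∈ A, ∃ c : ℂ, P * B * P = c • P)
    (hlam : P * IA * P = l • P) (hl1 : l ≠ 1) (hne : IA * P ≠ P) :
    (1 - l)⁻¹ • ((1 - IA) * P * (1 - IA)) ∈ A ∧
    (1 - l)⁻¹ • ((1 - IA) * P * (1 - IA)) ≠ 0 ∧
    ((1 - l)⁻¹ • ((1 - IA) * P * (1 - IA)))ᴴ = (1 - l)⁻¹ • ((1 - IA) * P * (1 - IA)) ∧
    ((1 - l)⁻¹ • ((1 - IA) * P * (1 - IA))) * ((1 - l)⁻¹ • ((1 - IA) * P * (1 - IA)))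
      = (1 - l)⁻¹ • ((1 - IA) * P * (1 - IA)) ∧
    (∀ B ∈ A, ∃ c : ℂ,
      ((1 - l)⁻¹ • ((1 - IA) * P * (1 - IA))) * B * ((1 - l)⁻¹ • ((1 - IA) * P * (1 - IA)))
        = c • ((1 - l)⁻¹ • ((1 - IA) * P * (1 - IA)))) ∧
    (IA + (1 - l)⁻¹ • ((1 - IA) * P * (1 - IA))) * P = P := by
  set Q : Matrix (Fin n) (Fin n) ℂ := (1 - IA) * P * (1 - IA) with hQdef
  have hl : (1 : ℂ) - l ≠ 0 := sub_ne_zero.mpr (fun h => hl1 h.symm)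
  -- l is real
  have hlstar : star l = l := by
    have h1 : (P * IA * P)ᴴ = star l • P := by rw [hlam, conjTranspose_smul, hPsa]
    have h2 : (P * IA * P)ᴴ = l • P := by
      rw [conjTranspose_mul, conjTranspose_mul, hPsa, hIAsa, ← mul_assoc, hlam]
    have := h1.symm.trans h2
    have h3 : (star l - l) • P = 0 := by rw [sub_smul, this, sub_self]
    rcases smul_eq_zero.mp h3 with h | h
    · linear_combination h
    · exact absurd h hP0
  -- idempotent of 1 - IA
  have hEidem : (1 - IA) * (1 - IA) = 1 - IA := by
    rw [mul_sub, sub_mul, sub_mul, hIAidem]; noncomm_ring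
  -- P (1-IA) P = (1-l) • P
  have hkey : P * (1 - IA) * P = (1 - l) • P := by
    rw [mul_sub, mul_one, sub_mul, hPidem, hlam, sub_smul, one_smul]
  -- Q * P = (1-l) • ((1-IA) * P)
  have hQP : Q * P = (1 - l) • ((1 - IA) * P) := by
    calc Q * P = (1 - IA) * (P * (1 - IA) * P) := by rw [hQdef]; noncomm_ring
    _ = (1 - IA) * ((1 - l) • P) := by rw [hkey]
    _ = (1 - l) • ((1 - IA) * P) := by rw [mul_smul_comm]
  -- Q * Q = (1-l) • Q
  have hQQ : Q * Q = (1 - l) • Q := by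
    calc Q * Q = (1 - IA) * P * ((1 - IA) * (1 - IA)) * P * (1 - IA) := by
          rw [hQdef]; noncomm_ring
    _ = (1 - IA) * (P * (1 - IA) * P) * (1 - IA) := by rw [hEidem]; noncomm_ring
    _ = (1 - IA) * ((1 - l) • P) * (1 - IA) := by rw [hkey]
    _ = (1 - l) • Q := by rw [hQdef, mul_smul_comm, smul_mul_assoc]
  -- P Q P = (1-l)^2 P, so Q ≠ 0
  have hPQP : P * Q * P = (1 - l) • ((1 - l) • P) := by
    calc P * Q * P = P * (1 - IA) * (P * (1 - IA) * P) := by rw [hQdef]; noncomm_ring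
    _ = P * (1 - IA) * ((1 - l) • P) := by rw [hkey]
    _ = (1 - l) • (P * (1 - IA) * P) := by rw [mul_smul_comm]
    _ = (1 - l) • ((1 - l) • P) := by rw [hkey]
  have hQ0 : Q ≠ 0 := by
    intro h
    have : P * Q * P = 0 := by rw [h, mul_zero, zero_mul]
    rw [hPQP] at this
    rcases smul_eq_zero.mp this with h' | h'
    · exact hl h'
    · rcases smul_eq_zero.mp h' with h'' | h''
      · exact hl h''
      · exact hP0 h''
  have hQA : Q ∈ A := by
    exact A.mul_mem (A.mul_mem (A.sub_mem (one_mem A) hIAA) hPA) (A.sub_mem (one_mem A) hIAA)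
  have hQsa : Qᴴ = Q := by
    rw [hQdef, conjTranspose_mul, conjTranspose_mul, conjTranspose_sub, conjTranspose_one,
      hIAsa, hPsa, mul_assoc]
  refine ⟨A.smul_mem hQA _, smul_ne_zero (inv_ne_zero hl) hQ0, ?_, ?_, ?_, ?_⟩
  · rw [conjTranspose_smul, hQsa, star_inv₀, star_sub, star_one, hlstar]
  · rw [smul_mul_assoc, mul_smul_comm, hQQ, smul_smul, smul_smul]
    congr 1
    field_simp
  · intro B hB
    obtain ⟨c, hc⟩ := hmin ((1 - IA) * B * (1 - IA))
      (A.mul_mem (A.mul_mem (A.sub_mem (one_mem A) hIAA) hB) (A.sub_mem (one_mem A) hIAA))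
    refine ⟨(1 - l)⁻¹ * c, ?_⟩
    have hQBQ : Q * B * Q = c • Q := by
      calc Q * B * Q
          = (1 - IA) * (P * ((1 - IA) * B * (1 - IA)) * P) * (1 - IA) := by
            rw [hQdef]; noncomm_ring
      _ = (1 - IA) * (c • P) * (1 - IA) := by rw [hc]
      _ = c • Q := by rw [hQdef, mul_smul_comm, smul_mul_assoc]
    rw [smul_mul_assoc, mul_smul_comm, smul_mul_assoc, hQBQ, smul_smul, smul_smul, smul_smul]
    ring_nf
  · rw [add_mul, smul_mul_assoc, hQP, smul_smul, inv_mul_cancel₀ hl, one_smul,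
      sub_mul, one_mul]
    noncomm_ring
end

section
/- For every real x > 0, ln x − 1/x < ψ(x) < ln x − 1/(2x), where ψ = Γ'/Γ is the digamma function. -/
/-!
Since log Γ is convex on (0, ∞) and its slope over [x, x + 1] is log x, we get
ψ(x) ≤ log x ≤ ψ(x + 1), and ψ(x + 1) = ψ(x) + 1/x. The lower bound follows from
ψ(x + 2) ≥ log (x + 1) together with 1/(x + 1) < log (1 + 1/x). For the upper bound, the
trapezoid estimate log (1 + 1/y) < (1/y + 1/(y + 1))/2 makes ψ(y) − log y + 1/(2y) strictly
increasing along y, y + 1, y + 2, …, while ψ ≤ log bounds it by 1/(2y) → 0.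
-/

/-- The digamma function ψ(x) = d/dx ln Γ(x). -/
noncomputable def digamma (x : ℝ) : ℝ :=
  deriv (fun y => Real.log (Real.Gamma y)) x

open Real Set Filter Topology

namespace Real

theorem log_lt_sub_inv_div_two {x : ℝ} (hx : 1 < x) : log x < (x - x⁻¹) / 2 := by
  rw [← sinh_log (by positivity)]
  exact self_lt_sinh_iff.2 (log_pos hx)

theorem inv_add_one_lt_log_add_one_sub_log {y : ℝ} (hy : 0 < y) :
    (y + 1)⁻¹ < log (y + 1) - log y := by
  have h := log_lt_sub_one_of_pos (x := y / (y + 1)) (by positivity) (by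
    rw [Ne, div_eq_one_iff_eq (by positivity)]; linarith)
  rw [log_div hy.ne' (by positivity)] at h
  have : y / (y + 1) - 1 = -(y + 1)⁻¹ := by field_simp; ring
  linarith

theorem log_add_one_sub_log_lt {y : ℝ} (hy : 0 < y) :
    log (y + 1) - log y < (y⁻¹ + (y + 1)⁻¹) / 2 := by
  have h := log_lt_sub_inv_div_two (x := (y + 1) / y) (by rw [one_lt_div hy]; linarith)
  rw [log_div (by positivity) hy.ne', inv_div] at h
  convert h using 2
  field_simp
  ring

end Real

theorem differentiableAt_log_Gamma {x : ℝ} (hx : 0 < x) :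
    DifferentiableAt ℝ (fun y => log (Gamma y)) x :=
  (differentiableAt_Gamma fun m => by linarith [(m.cast_nonneg : (0 : ℝ) ≤ m)]).log
    (Gamma_pos_of_pos hx).ne'

theorem digamma_add_one {x : ℝ} (hx : 0 < x) : digamma (x + 1) = digamma x + x⁻¹ := by
  have hshift : (fun y => log (Gamma (y + 1))) =ᶠ[𝓝 x] fun y => log (Gamma y) + log y := by
    filter_upwards [eventually_gt_nhds hx] with y hy
    rw [Gamma_add_one hy.ne', log_mul hy.ne' (Gamma_pos_of_pos hy).ne', add_comm]
  rw [digamma, ← deriv_comp_add_const, hshift.deriv_eq,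
    deriv_fun_add (differentiableAt_log_Gamma hx) (differentiableAt_log hx.ne'), deriv_log,
    digamma]

theorem slope_log_Gamma_add_one {x : ℝ} (hx : 0 < x) :
    slope (log ∘ Gamma) x (x + 1) = log x := by
  rw [slope_def_field, Function.comp_apply, Function.comp_apply, Gamma_add_one hx.ne',
    log_mul hx.ne' (Gamma_pos_of_pos hx).ne']
  ring

theorem digamma_le_log {x : ℝ} (hx : 0 < x) : digamma x ≤ log x := by
  rw [← slope_log_Gamma_add_one hx]
  exact convexOn_log_Gamma.deriv_le_slope hx (by simp; linarith) (lt_add_one x)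
    (differentiableAt_log_Gamma hx)

theorem log_le_digamma_add_one {x : ℝ} (hx : 0 < x) : log x ≤ digamma (x + 1) := by
  rw [← slope_log_Gamma_add_one hx]
  exact convexOn_log_Gamma.slope_le_deriv hx (by simp; linarith) (lt_add_one x)
    (differentiableAt_log_Gamma (by linarith))

theorem digamma_sub_log_add_inv_two_mul_lt {y : ℝ} (hy : 0 < y) :
    digamma y - log y + (2 * y)⁻¹ < digamma (y + 1) - log (y + 1) + (2 * (y + 1))⁻¹ := by
  rw [digamma_add_one hy]
  linarith [log_add_one_sub_log_lt hy, mul_inv (2 : ℝ) y, mul_inv (2 : ℝ) (y + 1)]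

theorem digamma_le_log_sub_inv_two_mul {x : ℝ} (hx : 0 < x) : digamma x ≤ log x - (2 * x)⁻¹ := by
  set g : ℕ → ℝ := fun n => digamma (x + n) - log (x + n) + (2 * (x + n))⁻¹
  have hmono : Monotone g := monotone_nat_of_le_succ fun n => by
    simp only [g, Nat.cast_succ, ← add_assoc]
    exact (digamma_sub_log_add_inv_two_mul_lt (by positivity)).le
  have hlim : Tendsto (fun n : ℕ => (2 * (x + n))⁻¹) atTop (𝓝 0) :=
    tendsto_inv_atTop_zero.comp <|
      (tendsto_atTop_add_const_left _ x tendsto_natCast_atTop_atTop).const_mul_atTop two_pos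
  have hg0 : g 0 ≤ 0 := ge_of_tendsto' hlim fun n => (hmono n.zero_le).trans <| by
    simp only [g]; linarith [digamma_le_log (x := x + n) (by positivity)]
  simp only [g, Nat.cast_zero, add_zero] at hg0
  linarith

/-- For every real x > 0, ln x − 1/x < ψ(x) < ln x − 1/(2x). -/
theorem digamma_bounds (x : ℝ) (hx : 0 < x) :
    Real.log x - 1 / x < digamma x ∧ digamma x < Real.log x - 1 / (2 * x) := by
  have hx1 : 0 < x + 1 := by linarith
  rw [one_div, one_div]
  constructor
  · have hconvex := log_le_digamma_add_one hx1
    rw [digamma_add_one hx1, digamma_add_one hx] at hconvex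
    linarith [inv_add_one_lt_log_add_one_sub_log hx]
  · have hshifted := digamma_le_log_sub_inv_two_mul hx1
    linarith [digamma_sub_log_add_inv_two_mul_lt hx]
end
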